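/- Let (G,*) be a group, k ≥ 1, and f_n : G^{k+1} → G for n ≥ 0. For u_0, v_1, …, v_k ∈ G define ζ_0 = u_0 and ζ_j = v_j^{-1} * ζ_{j−1} for j = 1,…,k. Then there exist functions g_n : G^k → G satisfying f_n(u_0, u_1, …, u_k) * u_0^{-1} = g_n(u_0 * u_1^{-1}, u_1 * u_2^{-1}, …, u_{k−1} * u_k^{-1}) for all u_0,…,u_k ∈ G and all n (i.e. the equation x_{n+1} = f_n(x_n,…,x_{n−k}) has the inversion form symmetry), if and only if for every n and all v_1,…,v_k ∈ G the quantity f_n(u_0, ζ_1, …, ζ_k) * u_0^{-1} is independent of u_0. -/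
import Mathlib


/-- The sequence `ζ_0 = u_0`, `ζ_j = v_j⁻¹ * ζ_{j-1}`. -/
def zetaInversion {G : Type*} [Group G] (u0 : G) (v : ℕ → G) : ℕ → G
  | 0 => u0
  | j + 1 => (v (j + 1))⁻¹ * zetaInversion u0 v j

/-- The difference equation with functions `f_n` has the inversion form
symmetry (i.e. there exist `g_n` with
`f_n(u_0,…,u_k) * u_0⁻¹ = g_n(u_0 * u_1⁻¹, …, u_{k-1} * u_k⁻¹)` for all arguments and
all `n`) if and only if `f_n(u_0, ζ_1, …, ζ_k) * u_0⁻¹` is independent of `u_0`. -/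
theorem stmt_6 {G : Type*} [Group G] (k : ℕ) (hk : 1 ≤ k)
    (f : ℕ → (Fin (k + 1) → G) → G) :
    (∃ g : ℕ → (Fin k → G) → G, ∀ (n : ℕ) (u : Fin (k + 1) → G),
        f n u * (u 0)⁻¹ = g n (fun j => u j.castSucc * (u j.succ)⁻¹))
    ↔ ∀ (n : ℕ) (v : ℕ → G) (u0 u0' : G),
        f n (fun i => zetaInversion u0 v i.val) * u0⁻¹ =
        f n (fun i => zetaInversion u0' v i.val) * u0'⁻¹ := by
  constructor
  · rintro ⟨g, hg⟩ n v u0 u0'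
    have key : ∀ w0 : G, f n (fun i => zetaInversion w0 v i.val) * w0⁻¹
        = g n (fun j => v (j.val + 1)) := by
      intro w0
      have h0 : zetaInversion w0 v (0 : Fin (k+1)).val = w0 := rfl
      have := hg n (fun i => zetaInversion w0 v i.val)
      rw [h0] at this
      rw [this]
      congr 1
      funext j
      show zetaInversion w0 v j.castSucc.val * (zetaInversion w0 v j.succ.val)⁻¹
          = v (j.val + 1)
      have hc : j.castSucc.val = j.val := rfl
      have hs : j.succ.val = j.val + 1 := rfl
      rw [hc, hs]
      show zetaInversion w0 v j.val *
        ((v (j.val + 1))⁻¹ * zetaInversion w0 v j.val)⁻¹ = v (j.val + 1)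
      group
    rw [key u0, key u0']
  · intro H
    refine ⟨fun n w => f n (fun i =>
        zetaInversion 1 (fun j => if h : j - 1 < k then w ⟨j - 1, h⟩ else 1) i.val),
      fun n u => ?_⟩
    set w : Fin k → G := fun j => u j.castSucc * (u j.succ)⁻¹ with hw
    set v : ℕ → G := fun j => if h : j - 1 < k then w ⟨j - 1, h⟩ else 1 with hv
    have hz : ∀ m (hm : m < k + 1), zetaInversion (u 0) v m = u ⟨m, hm⟩ := by
      intro m
      induction m with
      | zero => intro hm; rfl
      | succ j ih =>
        intro hm
        have hj : j < k + 1 := Nat.lt_of_succ_lt hm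
        have hjk : j < k := Nat.lt_of_succ_lt_succ hm
        show (v (j + 1))⁻¹ * zetaInversion (u 0) v j = u ⟨j + 1, hm⟩
        rw [ih hj]
        have hv1 : v (j + 1) = w ⟨j, hjk⟩ := by
          simp only [hv, Nat.add_sub_cancel, dif_pos hjk]
        rw [hv1]
        simp only [hw]
        have hc : (⟨j, hjk⟩ : Fin k).castSucc = ⟨j, hj⟩ := rfl
        have hs : (⟨j, hjk⟩ : Fin k).succ = ⟨j + 1, hm⟩ := rfl
        rw [hc, hs]
        group
    have hu : (fun i : Fin (k+1) => zetaInversion (u 0) v i.val) = u := by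
      funext i
      rw [hz i.val i.isLt]
    calc f n u * (u 0)⁻¹
        = f n (fun i => zetaInversion (u 0) v i.val) * (u 0)⁻¹ := by rw [hu]
      _ = f n (fun i => zetaInversion 1 v i.val) * (1 : G)⁻¹ := H n v (u 0) 1
      _ = f n (fun i => zetaInversion 1 v i.val) := by group
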